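/- Let A and B be symmetric d×d real matrices such that I + A and I + B are positive definite. Then −log det₂((I+A)(I+B)^{-1}) = ∫₀¹ (1−t)·‖(I+(1−t)B+tA)^{-1/2} (A−B) (I+(1−t)B+tA)^{-1/2}‖²_HS dt. -/

import Mathlib

/-!
Put `C = A - B` and `M t = (1 + B) + t • C = (1 - t) • (1 + B) + t • (1 + A)`, which is
positive definite for `t ∈ [0, 1]`. Jacobi's formula `(log det M)' = tr (M⁻¹ C)` and
`(M⁻¹)' = -M⁻¹ C M⁻¹` show that `-((1 - t) tr (M⁻¹ C) + log det M)` is an antiderivative of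
`(1 - t) tr (M⁻¹ C M⁻¹ C)`. Its increment over `[0, 1]` is
`tr ((1 + B)⁻¹ C) + log det (1 + B) - log det (1 + A)`, which is `-log det₂ ((1 + A) (1 + B)⁻¹)`.
Finally `M^{-1/2}` is symmetric with square `M⁻¹`, so
`‖M^{-1/2} C M^{-1/2}‖²_HS = tr (M⁻¹ C M⁻¹ C)`.
-/

open Matrix MeasureTheory Real
open scoped Classical
noncomputable section

/-- Hilbert-Schmidt (Frobenius) norm of a real matrix. -/
def hsNorm {d : ℕ} (M : Matrix (Fin d) (Fin d) ℝ) : ℝ :=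
  Real.sqrt (∑ i, ∑ j, (M i j) ^ 2)

/-- Operator norm of a matrix, induced by the Euclidean norm on ℝ^d. -/
def opNorm {d : ℕ} (M : Matrix (Fin d) (Fin d) ℝ) : ℝ :=
  ‖LinearMap.toContinuousLinearMap (Matrix.toEuclideanLin M)‖

/-- The positive square root of a positive semidefinite matrix (junk value `0` otherwise). -/

def msqrt {d : ℕ} (M : Matrix (Fin d) (Fin d) ℝ) : Matrix (Fin d) (Fin d) ℝ :=
  if h : M.PosSemidef then (h.1.eigenvectorUnitary : Matrix (Fin d) (Fin d) ℝ) *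
    diagonal ((↑) ∘ (√·) ∘ h.1.eigenvalues) * (star h.1.eigenvectorUnitary : Matrix (Fin d) (Fin d) ℝ) else 0

/-- `M^{-1/2}`: the inverse of the positive square root. -/
def invSqrt {d : ℕ} (M : Matrix (Fin d) (Fin d) ℝ) : Matrix (Fin d) (Fin d) ℝ :=
  (msqrt M)⁻¹

/-- The Fredholm–Carleman determinant `det₂(M) = exp(Trace(Id - M)) * det M`. -/
def det2 {d : ℕ} (M : Matrix (Fin d) (Fin d) ℝ) : ℝ :=
  Real.exp ((1 - M).trace) * M.det

theorem hsNorm_sq_eq_trace_mul_transpose {d : ℕ} (M : Matrix (Fin d) (Fin d) ℝ) :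
    hsNorm M ^ 2 = (M * Mᵀ).trace := by
  rw [hsNorm, sq_sqrt (by positivity)]
  simp [Matrix.trace, Matrix.mul_apply, sq]

theorem msqrt_transpose {d : ℕ} {N : Matrix (Fin d) (Fin d) ℝ} (hN : N.PosSemidef) :
    (msqrt N)ᵀ = msqrt N := by
  simp [msqrt, hN, Matrix.transpose_mul, Matrix.mul_assoc, Matrix.star_eq_conjTranspose]

theorem msqrt_mul_self {d : ℕ} {N : Matrix (Fin d) (Fin d) ℝ} (hN : N.PosSemidef) :
    msqrt N * msqrt N = N := by
  have hconj : msqrt N = Unitary.conjStarAlgAut ℝ _ hN.1.eigenvectorUnitary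
      (diagonal ((↑) ∘ (√·) ∘ hN.1.eigenvalues)) := by
    rw [msqrt, dif_pos hN]; rfl
  conv_rhs => rw [hN.1.spectral_theorem]
  rw [hconj, ← map_mul, diagonal_mul_diagonal]
  congr 2
  ext i
  simp [mul_self_sqrt (hN.eigenvalues_nonneg i)]

theorem hsNorm_invSqrt_mul_mul_invSqrt_sq {d : ℕ} {N C : Matrix (Fin d) (Fin d) ℝ}
    (hN : N.PosSemidef) (hC : C.IsSymm) :
    hsNorm (invSqrt N * C * invSqrt N) ^ 2 = (N⁻¹ * C * N⁻¹ * C).trace := by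
  have hS : (invSqrt N)ᵀ = invSqrt N := by
    rw [invSqrt, transpose_nonsing_inv, msqrt_transpose hN]
  have hSS : invSqrt N * invSqrt N = N⁻¹ := by
    rw [invSqrt, ← Matrix.mul_inv_rev, msqrt_mul_self hN]
  set S := invSqrt N
  calc hsNorm (S * C * S) ^ 2 = (S * (C * (S * S) * C * S)).trace := by
        rw [hsNorm_sq_eq_trace_mul_transpose, transpose_mul, transpose_mul, hS, hC.eq]
        simp only [Matrix.mul_assoc]
    _ = (C * (S * S) * C * (S * S)).trace := by
        rw [trace_mul_comm]
        simp only [Matrix.mul_assoc]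
    _ = (N⁻¹ * C * N⁻¹ * C).trace := by
        rw [hSS, trace_mul_comm]
        simp only [Matrix.mul_assoc]

theorem convex_setOf_posDef {n : Type*} [Fintype n] :
    Convex ℝ {M : Matrix n n ℝ | M.PosDef} := by
  intro P hP Q hQ a b ha hb hab
  rcases ha.eq_or_lt with rfl | ha
  · simpa [show b = 1 by linarith] using hQ
  · exact (hP.smul ha).add_posSemidef (hQ.posSemidef.smul hb)

theorem Matrix.PosDef.add_smul_sub {n : Type*} [Fintype n] {P Q : Matrix n n ℝ}
    (hP : P.PosDef) (hQ : Q.PosDef) {t : ℝ} (ht₀ : 0 ≤ t) (ht₁ : t ≤ 1) :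
    (P + t • (Q - P)).PosDef := by
  have hsegment : P + t • (Q - P) = (1 - t) • P + t • Q := by module
  exact hsegment ▸ convex_setOf_posDef hP hQ (by linarith) ht₀ (by ring)

section Calculus

variable {𝕜 : Type*} [NontriviallyNormedField 𝕜] {n : Type*} [Fintype n] [DecidableEq n]

theorem hasDerivAt_det_one_add_smul (C : Matrix n n 𝕜) :
    HasDerivAt (fun r : 𝕜 => (1 + r • C).det) C.trace 0 := by
  have hpoly : (fun r : 𝕜 => (1 + r • C).det) =
      fun r => (det (1 + (Polynomial.X : Polynomial 𝕜) • C.map Polynomial.C)).eval r := by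
    ext r
    simp [eval_det, ← smul_eq_mul_diagonal]
  rw [hpoly, ← derivative_det_one_add_X_smul]
  exact Polynomial.hasDerivAt _ 0

theorem hasDerivAt_det_add_smul (P C : Matrix n n 𝕜) {t : 𝕜} (ht : (P + t • C).det ≠ 0) :
    HasDerivAt (fun s : 𝕜 => (P + s • C).det)
      ((P + t • C).det * ((P + t • C)⁻¹ * C).trace) t := by
  set M := P + t • C
  have hfactor : ∀ s : 𝕜, P + s • C = M * (1 + (s - t) • (M⁻¹ * C)) := fun s => by
    rw [mul_add, mul_one, mul_smul_comm, ← Matrix.mul_assoc, mul_nonsing_inv _ ht.isUnit,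
      Matrix.one_mul]
    module
  simp_rw [hfactor, det_mul]
  have hdet := hasDerivAt_det_one_add_smul (M⁻¹ * C)
  rw [← sub_self t] at hdet
  exact (hdet.comp_sub_const t t).const_mul _

end Calculus

section MatrixInverse

-- Matrices carry no global norm; any norm serves to differentiate `Ring.inverse`.
attribute [local instance] Matrix.linftyOpNormedRing Matrix.linftyOpNormedAlgebra

variable {𝕜 : Type*} [RCLike 𝕜] {n : Type*} [Fintype n] [DecidableEq n]

theorem HasDerivAt.matrix_inv {M : 𝕜 → Matrix n n 𝕜} {M' : Matrix n n 𝕜} {t : 𝕜}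
    (hM : HasDerivAt M M' t) (ht : (M t).det ≠ 0) :
    HasDerivAt (fun s => (M s)⁻¹) (-((M t)⁻¹ * M' * (M t)⁻¹)) t := by
  obtain ⟨u, hu⟩ : IsUnit (M t) := (isUnit_iff_isUnit_det _).mpr ht.isUnit
  have hinv := (hu ▸ hasFDerivAt_ringInverse (𝕜 := 𝕜) u).comp_hasDerivAt t hM
  rw [show (fun s => (M s)⁻¹) = Ring.inverse ∘ M from
    funext fun s => nonsing_inv_eq_ringInverse (M s)]
  refine hinv.congr_deriv ?_
  simp [← hu, coe_units_inv]

theorem hasDerivAt_trace_inv_add_smul_mul (P C : Matrix n n 𝕜) {t : 𝕜}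
    (ht : (P + t • C).det ≠ 0) :
    HasDerivAt (fun s : 𝕜 => ((P + s • C)⁻¹ * C).trace)
      (-((P + t • C)⁻¹ * C * (P + t • C)⁻¹ * C).trace) t := by
  have hpath : HasDerivAt (fun s : 𝕜 => P + s • C) C t :=
    (((hasDerivAt_id t).smul_const C).const_add P).congr_deriv (one_smul _ _)
  exact (LinearMap.toContinuousLinearMap (traceLinearMap n 𝕜 𝕜)).hasFDerivAt.comp_hasDerivAt
    t ((hpath.matrix_inv ht).mul_const C) |>.congr_deriv (by rw [neg_mul]; exact trace_neg _)

end MatrixInverse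

section Real

variable {n : Type*} [Fintype n] [DecidableEq n]

theorem hasDerivAt_neg_one_sub_mul_trace_add_log_det (P C : Matrix n n ℝ) {t : ℝ}
    (ht : (P + t • C).det ≠ 0) :
    HasDerivAt (fun s => -((1 - s) * ((P + s • C)⁻¹ * C).trace + log (P + s • C).det))
      ((1 - t) * ((P + t • C)⁻¹ * C * (P + t • C)⁻¹ * C).trace) t := by
  refine ((((hasDerivAt_id' t).const_sub 1).mul (hasDerivAt_trace_inv_add_smul_mul P C ht)).add
    ((hasDerivAt_det_add_smul P C ht).log ht)).neg.congr_deriv ?_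
  field_simp
  ring

theorem continuousAt_inv_add_smul (P C : Matrix n n ℝ) {t : ℝ} (ht : (P + t • C).det ≠ 0) :
    ContinuousAt (fun s : ℝ => (P + s • C)⁻¹) t := by
  refine (continuousAt_matrix_inv _ ?_).comp (by fun_prop)
  simpa [Ring.inverse_eq_inv'] using continuousAt_inv₀ ht

theorem integral_one_sub_mul_trace_inv_mul_sq {P Q : Matrix n n ℝ} (hP : P.PosDef)
    (hQ : Q.PosDef) :
    ∫ t in (0 : ℝ)..1,
        (1 - t) * ((P + t • (Q - P))⁻¹ * (Q - P) * (P + t • (Q - P))⁻¹ * (Q - P)).trace =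
      (P⁻¹ * (Q - P)).trace + log P.det - log Q.det := by
  have hdet : ∀ t ∈ Set.uIcc (0 : ℝ) 1, (P + t • (Q - P)).det ≠ 0 := fun t ht => by
    rw [Set.uIcc_of_le zero_le_one] at ht
    exact (hP.add_smul_sub hQ ht.1 ht.2).det_pos.ne'
  have hcont : ContinuousOn (fun t : ℝ =>
      (1 - t) * ((P + t • (Q - P))⁻¹ * (Q - P) * (P + t • (Q - P))⁻¹ * (Q - P)).trace)
      (Set.uIcc 0 1) := fun t ht => by
    have hinv := continuousAt_inv_add_smul P (Q - P) (hdet t ht)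
    fun_prop
  rw [intervalIntegral.integral_eq_sub_of_hasDerivAt
    (fun t ht => hasDerivAt_neg_one_sub_mul_trace_add_log_det P (Q - P) (hdet t ht))
    hcont.intervalIntegrable]
  simp only [sub_self, one_smul, add_sub_cancel, zero_mul, zero_add, sub_zero, zero_smul, add_zero,
    one_mul, neg_add_rev]
  ring

end Real

theorem log_det2_mul_inv {d : ℕ} {P Q : Matrix (Fin d) (Fin d) ℝ} (hP : 0 < P.det)
    (hQ : 0 < Q.det) :
    log (det2 (Q * P⁻¹)) = log Q.det - log P.det - (P⁻¹ * (Q - P)).trace := by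
  have htrace : (1 - Q * P⁻¹).trace = -(P⁻¹ * (Q - P)).trace := by
    rw [← mul_nonsing_inv P hP.ne'.isUnit, ← sub_mul, trace_mul_comm, ← neg_sub, mul_neg,
      trace_neg]
  have hdet : (Q * P⁻¹).det = Q.det * P.det⁻¹ := by
    rw [det_mul, det_nonsing_inv, Ring.inverse_eq_inv']
  rw [det2, htrace, hdet, log_mul (exp_ne_zero _) (by positivity), log_exp,
    log_mul hQ.ne' (by positivity), log_inv]
  ring

theorem stmt_2 {d : ℕ} (A B : Matrix (Fin d) (Fin d) ℝ)
    (hAs : A.IsSymm) (hBs : B.IsSymm)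
    (hA : (1 + A).PosDef) (hB : (1 + B).PosDef) :
    -Real.log (det2 ((1 + A) * (1 + B)⁻¹)) =
      ∫ t in (0:ℝ)..1, (1 - t) *
        (hsNorm (invSqrt (1 + (1 - t) • B + t • A) * (A - B) *
          invSqrt (1 + (1 - t) • B + t • A))) ^ 2 := by
  have hsegment : ∀ t : ℝ, 1 + (1 - t) • B + t • A = (1 + B) + t • ((1 + A) - (1 + B)) :=
    fun t => by module
  calc -log (det2 ((1 + A) * (1 + B)⁻¹))
      = ((1 + B)⁻¹ * ((1 + A) - (1 + B))).trace + log (1 + B).det - log (1 + A).det := by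
        rw [log_det2_mul_inv hB.det_pos hA.det_pos]
        ring
    _ = _ := (integral_one_sub_mul_trace_inv_mul_sq hB hA).symm
    _ = _ := by
      refine intervalIntegral.integral_congr fun t ht => ?_
      rw [Set.uIcc_of_le zero_le_one] at ht
      have hpos := hsegment t ▸ hB.add_smul_sub hA ht.1 ht.2
      rw [hsNorm_invSqrt_mul_mul_invSqrt_sq hpos.posSemidef (hAs.sub hBs), hsegment,
        add_sub_add_left_eq_sub]
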